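/- Let k < 0 be a real number, b = 2 - 1/k, and for x, y ∈ ℝ define the KMNCS kernel K(x, y) = ( ∑_{n=0}^∞ (x y / k²)ⁿ / ((n!)² ((b)_n)²) ) / (N(x) N(y)), where N(x) = ( ∑_{n=0}^∞ (x²/k²)ⁿ / ((n!)² ((b)_n)²) )^{1/2} and (b)_n is the rising Pochhammer symbol. Then K is a symmetric positive semidefinite kernel: K(x, y) = K(y, x), K(x, x) = 1, and for every finite family x_1, …, x_m ∈ ℝ and real coefficients c_1, …, c_m, the Gram sum ∑_{i,j} c_i c_j K(x_i, x_j) ≥ 0. -/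

import Mathlib

/-!
Writing `b = 2 - 1/k` and `w n = (n!)² ((b)_n)²`, the numerator of the kernel is
`∑ₙ (x/k)ⁿ (y/k)ⁿ / w n`. For `k < 0` we have `b > 2`, so `w n ≥ n!` and the series is dominated
by the exponential series; each term is a rank-one kernel with positive weight, so a Gram sum is
a convergent series of weighted squares `(∑ᵢ cᵢ (xᵢ/k)ⁿ)² / w n`. Dividing by `N(x) N(y)` only
rescales the coefficients `cᵢ`, and on the diagonal the numerator is `N(x)² > 0`.
-/

open Finset

noncomputable def pochhammer' (b : ℝ) (n : ℕ) : ℝ :=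
  ∏ i ∈ Finset.range n, (b + i)

noncomputable def kmncsNorm (k : ℝ) (x : ℝ) : ℝ :=
  Real.sqrt (∑' n : ℕ,
    (x ^ 2 / k ^ 2) ^ n / ((n.factorial : ℝ) ^ 2 * (pochhammer' (2 - 1 / k) n) ^ 2))

noncomputable def kmncsKernel (k : ℝ) (x y : ℝ) : ℝ :=
  (∑' n : ℕ,
      (x * y / k ^ 2) ^ n / ((n.factorial : ℝ) ^ 2 * (pochhammer' (2 - 1 / k) n) ^ 2)) /
    (kmncsNorm k x * kmncsNorm k y)

section PowerSeriesKernel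

variable {w : ℕ → ℝ}

theorem summable_pow_div_of_factorial_le (hw : ∀ n, (n.factorial : ℝ) ≤ w n) (z : ℝ) :
    Summable fun n => z ^ n / w n := by
  refine Summable.of_norm_bounded (Real.summable_pow_div_factorial |z|) fun n => ?_
  have hfac : (0 : ℝ) < n.factorial := mod_cast n.factorial_pos
  rw [Real.norm_eq_abs, abs_div, abs_pow, abs_of_pos (hfac.trans_le (hw n))]
  exact div_le_div_of_nonneg_left (by positivity) hfac (hw n)

theorem tsum_pow_div_pos_of_factorial_le (hw : ∀ n, (n.factorial : ℝ) ≤ w n) {z : ℝ}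
    (hz : 0 ≤ z) : 0 < ∑' n, z ^ n / w n := by
  have hw_pos : ∀ n, 0 < w n := fun n =>
    (Nat.cast_pos.mpr n.factorial_pos).trans_le (hw n)
  refine (summable_pow_div_of_factorial_le hw z).tsum_pos
    (fun n => div_nonneg (pow_nonneg hz n) (hw_pos n).le) 0 ?_
  simpa using hw_pos 0

theorem sum_sum_mul_tsum_pow_div_nonneg (hw : ∀ n, 0 ≤ w n)
    (hs : ∀ z, Summable fun n => z ^ n / w n) {m : ℕ} (u c : Fin m → ℝ) :
    0 ≤ ∑ i, ∑ j, c i * c j * ∑' n, (u i * u j) ^ n / w n := by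
  have hterm : ∀ i j, c i * c j * ∑' n, (u i * u j) ^ n / w n
      = ∑' n, c i * u i ^ n * (c j * u j ^ n) / w n := by
    intro i j
    rw [← tsum_mul_left]
    congr 1 with n
    ring
  have hsummable : ∀ i j, Summable fun n => c i * u i ^ n * (c j * u j ^ n) / w n := fun i j =>
    ((hs (u i * u j)).mul_left (c i * c j)).congr fun n => by ring
  simp_rw [hterm]
  rw [sum_congr rfl fun i _ => (Summable.tsum_finsetSum fun j _ => hsummable i j).symm,
    ← Summable.tsum_finsetSum fun i _ => summable_sum fun j _ => hsummable i j]
  refine tsum_nonneg fun n => ?_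
  have hsq : ∑ i, ∑ j, c i * u i ^ n * (c j * u j ^ n) / w n
      = (∑ i, c i * u i ^ n) * (∑ i, c i * u i ^ n) / w n := by
    simp_rw [sum_mul_sum, sum_div]
  rw [hsq]
  exact div_nonneg (mul_self_nonneg _) (hw n)

end PowerSeriesKernel

theorem one_le_pochhammer' {b : ℝ} (hb : 1 ≤ b) (n : ℕ) : 1 ≤ pochhammer' b n :=
  Finset.one_le_prod fun i _ => by linarith [(Nat.cast_nonneg i : (0 : ℝ) ≤ i)]

noncomputable def kmncsWeight (k : ℝ) (n : ℕ) : ℝ :=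
  (n.factorial : ℝ) ^ 2 * (pochhammer' (2 - 1 / k) n) ^ 2

theorem factorial_le_kmncsWeight {k : ℝ} (hk : k < 0) (n : ℕ) :
    (n.factorial : ℝ) ≤ kmncsWeight k n := by
  have hfac : (1 : ℝ) ≤ n.factorial := mod_cast n.factorial_pos
  have hpoch : 1 ≤ pochhammer' (2 - 1 / k) n :=
    one_le_pochhammer' (by linarith [one_div_neg.mpr hk]) n
  have hpoch_sq : 1 ≤ pochhammer' (2 - 1 / k) n ^ 2 := one_le_pow₀ hpoch
  unfold kmncsWeight
  nlinarith

theorem kmncsKernel_comm (k x y : ℝ) : kmncsKernel k x y = kmncsKernel k y x := by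
  rw [kmncsKernel, kmncsKernel, mul_comm x y, mul_comm (kmncsNorm k x)]

theorem kmncsKernel_self {k : ℝ} (hk : k < 0) (x : ℝ) : kmncsKernel k x x = 1 := by
  have hpos : 0 < ∑' n, (x ^ 2 / k ^ 2) ^ n / kmncsWeight k n :=
    tsum_pow_div_pos_of_factorial_le (factorial_le_kmncsWeight hk) (by positivity)
  unfold kmncsWeight at hpos
  rw [kmncsKernel, kmncsNorm, Real.mul_self_sqrt hpos.le, ← sq]
  exact div_self hpos.ne'

theorem kmncsKernel_gram_nonneg {k : ℝ} (hk : k < 0) {m : ℕ} (x c : Fin m → ℝ) :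
    0 ≤ ∑ i, ∑ j, c i * c j * kmncsKernel k (x i) (x j) := by
  have hrescale : ∀ i j, c i * c j * kmncsKernel k (x i) (x j)
      = c i / kmncsNorm k (x i) * (c j / kmncsNorm k (x j)) *
          ∑' n, (x i / k * (x j / k)) ^ n / kmncsWeight k n := by
    intro i j
    have hsplit : x i * x j / k ^ 2 = x i / k * (x j / k) := by ring
    rw [kmncsKernel, hsplit]
    unfold kmncsWeight
    ring
  simp_rw [hrescale]
  exact sum_sum_mul_tsum_pow_div_nonneg (fun n => by unfold kmncsWeight; positivity)
    (summable_pow_div_of_factorial_le (factorial_le_kmncsWeight hk)) _ _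

/-- for `k < 0` the KMNCS kernel is symmetric, takes the value 1 on the
diagonal, and is positive semidefinite: every Gram sum `∑ᵢⱼ cᵢ cⱼ K(xᵢ, xⱼ)` with real
coefficients is nonnegative. -/
theorem kmncsKernel_posSemidef (k : ℝ) (hk : k < 0) :
    (∀ x y : ℝ, kmncsKernel k x y = kmncsKernel k y x) ∧
      (∀ x : ℝ, kmncsKernel k x x = 1) ∧
      ∀ (m : ℕ) (x : Fin m → ℝ) (c : Fin m → ℝ),
        0 ≤ ∑ i : Fin m, ∑ j : Fin m, c i * c j * kmncsKernel k (x i) (x j) :=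
  ⟨kmncsKernel_comm k, kmncsKernel_self hk, fun _ => kmncsKernel_gram_nonneg hk⟩
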